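/- Let G be a finite simple graph on at least 3 vertices. If the minimum degree of G satisfies δ(G) ≥ α̃(G) + 1, where α̃(G) is the bipartite independence number of G, then G is hamiltonian-connected. -/

import Mathlib

open SimpleGraph

/-- The bipartite independence number of a finite simple graph `G`: the smallest `q : ℕ` for
which there exist positive integers `s` and `t` with `s + t = q + 1` such that for any two
disjoint vertex subsets `A`, `B` with `|A| = s` and `|B| = t` there is an edge between them. -/
noncomputable def bipIndepNum {V : Type*} [Fintype V] (G : SimpleGraph V) : ℕ :=
  sInf {q : ℕ | ∃ s t : ℕ, 0 < s ∧ 0 < t ∧ s + t = q + 1 ∧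
    ∀ A B : Finset V, Disjoint A B → A.card = s → B.card = t →
      ∃ a ∈ A, ∃ b ∈ B, G.Adj a b}

/-- A graph is `k`-connected if it has more than `k` vertices and deleting any set of fewer
than `k` vertices leaves a connected graph. -/
def KConnected {V : Type*} [Fintype V] [DecidableEq V] (k : ℕ) (G : SimpleGraph V) : Prop :=
  k < Fintype.card V ∧
    ∀ S : Finset V, S.card < k → (G.induce ((↑S : Set V)ᶜ)).Connected

/-- A graph is hamiltonian-connected if between any two distinct vertices there is a
Hamilton path. -/
def HamiltonianConnected {V : Type*} [DecidableEq V] (G : SimpleGraph V) : Prop :=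
  ∀ u v : V, u ≠ v → ∃ p : G.Walk u v, p.IsHamiltonian

/-- The join of two graphs. -/
def graphJoin {α β : Type*} (G : SimpleGraph α) (H : SimpleGraph β) :
    SimpleGraph (α ⊕ β) where
  Adj x y :=
    match x, y with
    | Sum.inl a, Sum.inl b => G.Adj a b
    | Sum.inr a, Sum.inr b => H.Adj a b
    | Sum.inl _, Sum.inr _ => True
    | Sum.inr _, Sum.inl _ => True
  symm := ⟨by rintro (a | a) (b | b) h <;> simp_all <;> exact h.symm⟩
  loopless := ⟨by rintro (a | a) h <;> simp_all⟩

instance {α β : Type*} (G : SimpleGraph α) (H : SimpleGraph β)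
    [DecidableRel G.Adj] [DecidableRel H.Adj] : DecidableRel (graphJoin G H).Adj
  | Sum.inl a, Sum.inl b => inferInstanceAs (Decidable (G.Adj a b))
  | Sum.inl _, Sum.inr _ => inferInstanceAs (Decidable True)
  | Sum.inr _, Sum.inl _ => inferInstanceAs (Decidable True)
  | Sum.inr a, Sum.inr b => inferInstanceAs (Decidable (H.Adj a b))

/-! Pick `s ≤ t` with `s + t = α̃(G) + 1 ≤ δ(G)` such that every `s`-set is joined by an edge
to every disjoint `t`-set. Let `P` be a longest `u`–`v` path, suppose it misses `w`, and let `H`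
be the component of `w` in `G - P`. A detour through `H` between two neighbours of `H` on `P`,
or between such a neighbour and `H` itself, would lengthen `P`. Hence the successors on `P` of
the neighbours of `H` other than `v` form an independent set `I` with no edges to `H`, and
`|N(H)| ≤ |I| + 1`, where `N(H)` is the `outerBoundary` of `H`. If `|H| ≤ t`, an `s`-subset of `I` and a `t`-subset of `H ∪ I` violate
the choice of `s, t`. If `|H| > t`, the set `Z ⊇ I` of vertices outside `H` with no neighbour
in `H` has fewer than `s` elements, so `|V - H| ≤ |Z| + |N(H)| ≤ 2|Z| + 1 < 2s`, and a vertex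
of `Z` has degree below `s + t`. -/

namespace List

variable {α : Type*}

theorem eq_append_cons_append_cons_or_swap {L : List α} {a b : α} (ha : a ∈ L) (hb : b ∈ L)
    (hab : a ≠ b) :
    (∃ A M B, L = A ++ a :: (M ++ b :: B)) ∨ ∃ A M B, L = A ++ b :: (M ++ a :: B) := by
  obtain ⟨A₁, B₁, rfl⟩ := append_of_mem ha
  rcases mem_append.1 hb with hbA | hbB
  · obtain ⟨A, M, rfl⟩ := append_of_mem hbA
    exact Or.inr ⟨A, M, B₁, by simp⟩
  · obtain ⟨M, B, rfl⟩ := append_of_mem ((mem_cons.1 hbB).resolve_left hab.symm)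
    exact Or.inl ⟨A₁, M, B, rfl⟩

variable [DecidableEq α]

def succOf (L : List α) (a : α) : α := L.getD (L.idxOf a + 1) a

theorem succOf_eq_of_eq_append {L A B : List α} {a b : α} (hL : L.Nodup)
    (h : L = A ++ a :: b :: B) : L.succOf a = b := by
  subst h
  have haA : a ∉ A := fun ha => (nodup_append.1 hL).2.2 a ha a mem_cons_self rfl
  rw [succOf, idxOf_append_of_notMem haA, getD_eq_getElem?_getD,
    getElem?_append_right (by omega)]
  simp

theorem head?_eq_succOf {L A X : List α} {a : α} (hL : L.Nodup) (h : L = A ++ a :: X)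
    (hX : X ≠ []) : X.head? = some (L.succOf a) := by
  obtain ⟨b, B, rfl⟩ := exists_cons_of_ne_nil hX
  rw [succOf_eq_of_eq_append hL h, head?_cons]

end List

namespace SimpleGraph

variable {V : Type*} {G : SimpleGraph V} {u v : V}

def HasCrossEdge (G : SimpleGraph V) (s t : ℕ) : Prop :=
  ∀ A B : Finset V, Disjoint A B → A.card = s → B.card = t →
    ∃ a ∈ A, ∃ b ∈ B, G.Adj a b

theorem HasCrossEdge.symm {s t : ℕ} (h : G.HasCrossEdge s t) : G.HasCrossEdge t s := by
  intro A B hAB hA hB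
  obtain ⟨b, hb, a, ha, hba⟩ := h B A hAB.symm hB hA
  exact ⟨a, ha, b, hb, hba.symm⟩

theorem exists_hasCrossEdge_of_bipIndepNum [Fintype V] (G : SimpleGraph V) :
    ∃ s t, s ≤ t ∧ s + t = bipIndepNum G + 1 ∧ G.HasCrossEdge s t := by
  classical
  have hne : Fintype.card V + 1 ∈ {q : ℕ | ∃ s t : ℕ, 0 < s ∧ 0 < t ∧ s + t = q + 1 ∧
      G.HasCrossEdge s t} := by
    refine ⟨1, Fintype.card V + 1, one_pos, Nat.succ_pos _, by omega, ?_⟩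
    intro A B hAB hA hB
    have := (Finset.card_union_of_disjoint hAB).symm.trans_le (Finset.card_le_univ (A ∪ B))
    omega
  obtain ⟨s, t, -, -, hst, h⟩ := Nat.sInf_mem ⟨_, hne⟩
  change s + t = bipIndepNum G + 1 at hst
  rcases le_total s t with hle | hle
  · exact ⟨s, t, hle, hst, h⟩
  · exact ⟨t, s, hle, by omega, h.symm⟩

theorem HasCrossEdge.card_lt_of_forall_not_adj {s t : ℕ} (h : G.HasCrossEdge s t)
    {Z H : Finset V} (hZH : Disjoint Z H) (hadj : ∀ x ∈ Z, ∀ y ∈ H, ¬ G.Adj x y) (ht : t ≤ H.card) :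
    Z.card < s := by
  by_contra! hs
  obtain ⟨A, hAZ, hA⟩ := Finset.exists_subset_card_eq hs
  obtain ⟨B, hBH, hB⟩ := Finset.exists_subset_card_eq ht
  obtain ⟨a, ha, b, hb, hab⟩ := h A B (hZH.mono hAZ hBH) hA hB
  exact hadj a (hAZ ha) b (hBH hb) hab

section Fintype

variable [Fintype V] [DecidableRel G.Adj]

theorem le_card_neighborFinset_of_le_minDegree {n : ℕ} (hn : n ≤ G.minDegree) (x : V) :
    n ≤ (G.neighborFinset x).card := by
  rw [card_neighborFinset_eq_degree]
  exact hn.trans (G.minDegree_le_degree x)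

theorem HasCrossEdge.reachable {s t : ℕ} (h : G.HasCrossEdge s t) (hδ : s + t ≤ G.minDegree)
    (u v : V) : G.Reachable u v := by
  classical
  by_contra huv
  obtain ⟨A, hAu, hA⟩ := Finset.exists_subset_card_eq
    (le_card_neighborFinset_of_le_minDegree ((Nat.le_add_right s t).trans hδ) u)
  obtain ⟨B, hBv, hB⟩ := Finset.exists_subset_card_eq
    (le_card_neighborFinset_of_le_minDegree ((Nat.le_add_left t s).trans hδ) v)
  have hu : ∀ x ∈ A, G.Reachable u x := fun x hx =>
    ((G.mem_neighborFinset u x).1 (hAu hx)).reachable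
  have hv : ∀ x ∈ B, G.Reachable v x := fun x hx =>
    ((G.mem_neighborFinset v x).1 (hBv hx)).reachable
  have hAB : Disjoint A B :=
    Finset.disjoint_left.2 fun x hxA hxB => huv ((hu x hxA).trans (hv x hxB).symm)
  obtain ⟨a, ha, b, hb, hab⟩ := h A B hAB hA hB
  exact huv ((hu a ha).trans (hab.reachable.trans (hv b hb).symm))

variable [DecidableEq V]

def outerBoundary (G : SimpleGraph V) [DecidableRel G.Adj] (H : Finset V) : Finset V :=
  {x ∈ Hᶜ | ∃ y ∈ H, G.Adj x y}

@[simp]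
theorem mem_outerBoundary {H : Finset V} {x : V} :
    x ∈ G.outerBoundary H ↔ x ∉ H ∧ ∃ y ∈ H, G.Adj x y := by
  simp [outerBoundary]

theorem minDegree_lt_card_add_card_outerBoundary {H : Finset V} (hH : H.Nonempty) :
    G.minDegree < H.card + (G.outerBoundary H).card := by
  obtain ⟨w, hw⟩ := hH
  have hsub : G.neighborFinset w ⊆ H.erase w ∪ G.outerBoundary H := by
    intro x hx
    rw [mem_neighborFinset] at hx
    by_cases hxH : x ∈ H
    · exact Finset.mem_union_left _ (Finset.mem_erase.2 ⟨hx.ne.symm, hxH⟩)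
    · exact Finset.mem_union_right _ (mem_outerBoundary.2 ⟨hxH, w, hw, hx.symm⟩)
  calc G.minDegree ≤ (G.neighborFinset w).card := le_card_neighborFinset_of_le_minDegree le_rfl w
    _ ≤ (H.erase w).card + (G.outerBoundary H).card :=
      (Finset.card_le_card hsub).trans (Finset.card_union_le _ _)
    _ < H.card + (G.outerBoundary H).card :=
      Nat.add_lt_add_right (Finset.card_erase_lt_of_mem hw) _

theorem minDegree_lt_card_compl {H : Finset V} {x : V} (hx : x ∉ H)
    (hadj : ∀ y ∈ H, ¬ G.Adj x y) : G.minDegree < Hᶜ.card := by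
  have hsub : G.neighborFinset x ⊆ Hᶜ.erase x := fun y hy =>
    Finset.mem_erase.2 ⟨((mem_neighborFinset _ _ _).1 hy).ne.symm,
      Finset.mem_compl.2 fun hyH => hadj y hyH ((mem_neighborFinset _ _ _).1 hy)⟩
  calc G.minDegree ≤ (G.neighborFinset x).card := le_card_neighborFinset_of_le_minDegree le_rfl x
    _ ≤ (Hᶜ.erase x).card := Finset.card_le_card hsub
    _ < Hᶜ.card := Finset.card_erase_lt_of_mem (Finset.mem_compl.2 hx)

theorem HasCrossEdge.card_add_one_lt_card_outerBoundary {s t : ℕ} (h : G.HasCrossEdge s t)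
    (hst : s ≤ t) (hδ : s + t ≤ G.minDegree) {H I : Finset V} (hH : H.Nonempty)
    (hHc : 1 < Hᶜ.card) (hIH : Disjoint I H) (hI : ∀ x ∈ I, ∀ y ∈ H ∪ I, ¬ G.Adj x y) :
    I.card + 1 < (G.outerBoundary H).card := by
  by_contra! hle
  have hHI := minDegree_lt_card_add_card_outerBoundary (G := G) hH
  by_cases hHt : H.card ≤ t
  · obtain ⟨A, hAI, hA⟩ := Finset.exists_subset_card_eq (show s ≤ I.card by omega)
    have hAH : Disjoint A (H ∪ I \ A) := Finset.disjoint_union_right.2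
      ⟨hIH.mono_left hAI, Finset.disjoint_sdiff⟩
    have hcard : (H ∪ I \ A).card = H.card + (I.card - s) := by
      rw [Finset.card_union_of_disjoint (hIH.mono_left Finset.sdiff_subset).symm,
        Finset.card_sdiff_of_subset hAI, hA]
    have := h.card_lt_of_forall_not_adj hAH (fun x hx y hy => hI x (hAI hx) y
      (Finset.union_subset_union le_rfl Finset.sdiff_subset hy)) (by omega)
    omega
  set Z := Hᶜ \ G.outerBoundary H
  have hZ : ∀ x ∈ Z, x ∉ H ∧ ∀ y ∈ H, ¬ G.Adj x y := fun x hx => by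
    simp only [Z, Finset.mem_sdiff, Finset.mem_compl, mem_outerBoundary] at hx
    exact ⟨hx.1, fun y hy hxy => hx.2 ⟨hx.1, y, hy, hxy⟩⟩
  have hZs : Z.card < s := h.card_lt_of_forall_not_adj
    (Finset.disjoint_left.2 fun x hx => (hZ x hx).1) (fun x hx => (hZ x hx).2) (by omega)
  have hIZ : I ⊆ Z := fun x hx => by
    have hxH : x ∉ H := Finset.disjoint_left.1 hIH hx
    simp only [Z, Finset.mem_sdiff, Finset.mem_compl, mem_outerBoundary, hxH, not_false_eq_true,
      true_and, not_exists, not_and]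
    exact fun y hy => hI x hx y (Finset.mem_union_left _ hy)
  have hHcZ : Hᶜ.card ≤ Z.card + (G.outerBoundary H).card := Finset.card_le_card_sdiff_add_card
  have := Finset.card_le_card hIZ
  obtain ⟨x, hx⟩ : Z.Nonempty := Finset.card_pos.1 (by omega)
  have := minDegree_lt_card_compl (hZ x hx).1 (hZ x hx).2
  omega

end Fintype

def LinkedOutside (G : SimpleGraph V) (S : Set V) (H : Finset V) : Prop :=
  ∀ a ∈ H, ∀ b ∈ H, ∃ q : G.Walk a b, q.IsPath ∧ ∀ x ∈ q.support, x ∉ S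

theorem LinkedOutside.notMem {S : Set V} {H : Finset V} (hH : G.LinkedOutside S H) {a : V}
    (ha : a ∈ H) : a ∉ S := by
  obtain ⟨q, -, hq⟩ := hH a ha a ha
  exact hq a q.start_mem_support

theorem exists_linkedOutside [Fintype V] (S : Set V) {w : V} (hw : w ∉ S) :
    ∃ H : Finset V, w ∈ H ∧ G.LinkedOutside S H ∧
      ∀ x ∈ H, ∀ y, G.Adj x y → y ∉ S → y ∈ H := by
  classical
  refine ⟨Finset.univ.filter fun x => ∃ q : G.Walk w x, ∀ y ∈ q.support, y ∉ S,
    ?_, ?_, ?_⟩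
  · simpa using ⟨Walk.nil, by simpa using hw⟩
  · simp only [LinkedOutside, Finset.mem_filter, Finset.mem_univ, true_and]
    rintro a ⟨qa, hqa⟩ b ⟨qb, hqb⟩
    refine ⟨(qa.reverse.append qb).toPath, (qa.reverse.append qb).toPath.2, fun x hx => ?_⟩
    rcases (Walk.mem_support_append_iff _ _).1 (Walk.support_toPath_subset_support _ hx) with h | h
    · exact hqa x (by simpa using h)
    · exact hqb x h
  · simp only [Finset.mem_filter, Finset.mem_univ, true_and]
    rintro x ⟨q, hq⟩ y hxy hy
    exact ⟨q.concat hxy, fun z hz => by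
      rw [Walk.support_concat, List.mem_append, List.mem_singleton] at hz
      exact hz.elim (hq z) (· ▸ hy)⟩

theorem exists_walk_support_eq {L : List V} (hL : L.IsChain G.Adj) (hu : L.head? = some u)
    (hv : L.getLast? = some v) : ∃ p : G.Walk u v, p.support = L := by
  have hne : L ≠ [] := by rintro rfl; simp at hu
  rw [List.head?_eq_some_head hne, Option.some_inj] at hu
  rw [List.getLast?_eq_some_getLast hne, Option.some_inj] at hv
  exact ⟨(Walk.ofSupport L hne hL).copy hu hv, by simp⟩

def Walk.IsLongestPath (p : G.Walk u v) : Prop :=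
  p.IsPath ∧ ∀ q : G.Walk u v, q.IsPath → q.length ≤ p.length

theorem Reachable.exists_isLongestPath [Fintype V] [DecidableEq V] [DecidableRel G.Adj]
    (h : G.Reachable u v) : ∃ p : G.Walk u v, p.IsLongestPath := by
  obtain ⟨q⟩ := h
  obtain ⟨p, -, hp⟩ := Finset.univ.exists_max_image (fun p : G.Path u v => p.1.length)
    ⟨q.toPath, Finset.mem_univ _⟩
  exact ⟨p.1, p.2, fun q hq => hp ⟨q, hq⟩ (Finset.mem_univ _)⟩

namespace Walk

variable {p : G.Walk u v}

/-- Replacing the segment `S` between `y` and `d` by the detour `r` followed by `S` reversed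
gives a longer `u`–`v` path. -/
theorem IsLongestPath.not_isChain_detour (hp : p.IsLongestPath) {P S Q : List V} {y d : V}
    (hsupp : p.support = P ++ y :: (S ++ d :: Q)) {a b : V} {r : G.Walk a b} (hr : r.IsPath)
    (hrp : ∀ x ∈ r.support, x ∉ p.support) :
    ¬ (y :: (r.support ++ S.reverse ++ [d])).IsChain G.Adj := by
  classical
  intro hchain
  set L' := P ++ y :: (r.support ++ S.reverse ++ d :: Q)
  have hperm : L'.Perm (p.support ++ r.support) := by
    rw [hsupp, List.perm_iff_count]
    intro x
    simp only [L', List.count_append, List.count_cons, List.count_reverse]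
    omega
  have hnd : L'.Nodup := hperm.nodup_iff.2 <| List.nodup_append.2
    ⟨hp.1.support_nodup, hr.support_nodup, fun x hx z hz hxz => hrp z hz (hxz ▸ hx)⟩
  have hch : L'.IsChain G.Adj := by
    have h := p.isChain_adj_support
    rw [hsupp, List.isChain_split, List.isChain_cons_split] at h
    rw [List.isChain_split (l₁ := P), List.isChain_cons_split]
    exact ⟨h.1, hchain, h.2.2⟩
  have hu : p.support.head? = some u := by cases p <;> simp
  have hv : p.support.getLast? = some v := by
    rw [List.getLast?_eq_some_getLast (support_ne_nil p), getLast_support]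
  rw [hsupp] at hu hv
  obtain ⟨q, hq⟩ := exists_walk_support_eq hch
    (by simpa [L', List.head?_append] using hu)
    (by simpa [L', List.getLast?_append, List.getLast?_cons] using hv)
  have hle := hp.2 q (IsPath.mk' (hq ▸ hnd))
  have hlen := congrArg List.length hq
  rw [hperm.length_eq, List.length_append, length_support, length_support,
    length_support] at hlen
  omega

theorem ne_nil_of_support_eq_append {A X : List V} {y : V} (h : p.support = A ++ y :: X)
    (hy : y ≠ v) : X ≠ [] := by
  rintro rfl
  have := p.getLast_support
  simp only [h, List.getLast_append_singleton] at this
  exact hy this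

variable [DecidableEq V]

theorem IsPath.exists_support_eq_append_succOf (hp : p.IsPath) {y : V} (hy : y ∈ p.support)
    (hyv : y ≠ v) : ∃ A B, p.support = A ++ y :: p.support.succOf y :: B := by
  obtain ⟨A, X, h⟩ := List.append_of_mem hy
  obtain ⟨c, B, rfl⟩ := List.exists_cons_of_ne_nil (ne_nil_of_support_eq_append h hyv)
  rw [List.succOf_eq_of_eq_append hp.support_nodup h]
  exact ⟨A, B, h⟩

theorem IsPath.exists_support_eq_of_eq_append (hp : p.IsPath) {A M B : List V} {y z : V}
    (h : p.support = A ++ y :: (M ++ z :: B)) (hzv : z ≠ v) :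
    ∃ Q, p.support = A ++ y :: (M ++ [z] ++ p.support.succOf z :: Q) ∧
      (M ++ [z]).head? = some (p.support.succOf y) := by
  obtain ⟨d, Q, rfl⟩ := List.exists_cons_of_ne_nil
    (ne_nil_of_support_eq_append (A := A ++ y :: M) (by simpa using h) hzv)
  refine ⟨Q, ?_, ?_⟩
  · rw [List.succOf_eq_of_eq_append hp.support_nodup (A := A ++ y :: M) (by simpa using h)]
    simpa using h
  · rw [← List.head?_eq_succOf hp.support_nodup h (by simp)]
    cases M <;> simp

theorem IsPath.injOn_succOf (hp : p.IsPath) :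
    Set.InjOn p.support.succOf {y | y ∈ p.support ∧ y ≠ v} := by
  rintro y ⟨hy, hyv⟩ z ⟨hz, hzv⟩ heq
  by_contra hyz
  wlog h : ∃ A M B, p.support = A ++ y :: (M ++ z :: B) generalizing y z
  · rcases List.eq_append_cons_append_cons_or_swap hy hz hyz with h' | h'
    · exact h h'
    · exact this hz hzv hy hyv heq.symm (Ne.symm hyz) h'
  obtain ⟨A, M, B, h⟩ := h
  obtain ⟨Q, hsupp, hhead⟩ := hp.exists_support_eq_of_eq_append h hzv
  have hnd := hp.support_nodup
  rw [hsupp, List.nodup_append] at hnd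
  have hmem : p.support.succOf z ∈ M ++ [z] := heq ▸ List.mem_of_mem_head? hhead
  exact (List.nodup_append.1 hnd.2.1.of_cons).2.2 _ hmem _ List.mem_cons_self rfl

theorem IsLongestPath.not_adj_succOf (hp : p.IsLongestPath) {H : Finset V}
    (hH : G.LinkedOutside {x | x ∈ p.support} H) {y a b : V} (hy : y ∈ p.support)
    (hyv : y ≠ v) (ha : a ∈ H) (hya : G.Adj y a) (hb : b ∈ H) :
    ¬ G.Adj (p.support.succOf y) b := by
  intro hcb
  obtain ⟨A, B, hsupp⟩ := hp.1.exists_support_eq_append_succOf hy hyv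
  obtain ⟨r, hr, hrp⟩ := hH a ha b hb
  refine hp.not_isChain_detour (S := []) hsupp hr hrp ?_
  simpa using ((r.concat hcb.symm).cons hya).isChain_adj_support

theorem IsLongestPath.not_adj_succOf_succOf (hp : p.IsLongestPath) {H : Finset V}
    (hH : G.LinkedOutside {x | x ∈ p.support} H) {y z a b : V} (hy : y ∈ p.support)
    (hyv : y ≠ v) (hz : z ∈ p.support) (hzv : z ≠ v) (hyz : y ≠ z) (ha : a ∈ H)
    (hya : G.Adj y a) (hb : b ∈ H) (hzb : G.Adj z b) :
    ¬ G.Adj (p.support.succOf y) (p.support.succOf z) := by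
  wlog h : ∃ A M B, p.support = A ++ y :: (M ++ z :: B) generalizing y z a b
  · rcases List.eq_append_cons_append_cons_or_swap hy hz hyz with h' | h'
    · exact absurd h' h
    · exact fun hadj => this hz hzv hy hyv hyz.symm hb hzb ha hya h' hadj.symm
  obtain ⟨A, M, B, h⟩ := h
  obtain ⟨Q, hsupp, hhead⟩ := hp.1.exists_support_eq_of_eq_append h hzv
  intro hadj
  generalize p.support.succOf z = d at hsupp hadj
  obtain ⟨r, hr, hrp⟩ := hH a ha b hb
  refine hp.not_isChain_detour hsupp hr hrp ?_
  have hseg : (M ++ [z]).IsChain G.Adj :=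
    p.isChain_adj_support.infix ⟨A ++ [y], d :: Q, by simp [hsupp]⟩
  have hback : ((M ++ [z]).reverse ++ [d]).IsChain G.Adj := by
    have := hseg.cons fun c hc => (Option.some_inj.1 (hhead.symm.trans hc)) ▸ hadj.symm
    simpa using List.isChain_reverse.2 (this.imp fun _ _ h => h.symm)
  have := List.IsChain.append_overlap (l₁ := y :: r.support) (l₂ := [z])
    (by simpa using ((r.concat hzb.symm).cons hya).isChain_adj_support) (by simpa using hback)
    (List.cons_ne_nil _ _)
  simpa using this

theorem IsLongestPath.exists_card_outerBoundary_le [Fintype V] [DecidableRel G.Adj]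
    (hp : p.IsLongestPath) {H : Finset V} (hH : G.LinkedOutside {x | x ∈ p.support} H)
    (hclosed : ∀ x ∈ H, ∀ y, G.Adj x y → y ∉ p.support → y ∈ H) :
    ∃ I : Finset V, Disjoint I H ∧ (∀ x ∈ I, ∀ y ∈ H ∪ I, ¬ G.Adj x y) ∧
      (G.outerBoundary H).card ≤ I.card + 1 := by
  set N := (G.outerBoundary H).erase v
  have hN : ∀ y ∈ N, y ∈ p.support ∧ y ≠ v ∧ ∃ a ∈ H, G.Adj y a := by
    intro y hy
    simp only [N, Finset.mem_erase, mem_outerBoundary] at hy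
    obtain ⟨hyv, hyH, a, ha, hya⟩ := hy
    exact ⟨by_contra fun h => hyH (hclosed a ha y hya.symm h), hyv, a, ha, hya⟩
  refine ⟨N.image p.support.succOf, Finset.disjoint_left.2 ?_, ?_, ?_⟩
  · simp only [Finset.mem_image]
    rintro _ ⟨y, hy, rfl⟩ hyH
    obtain ⟨A, B, hsupp⟩ := hp.1.exists_support_eq_append_succOf (hN y hy).1 (hN y hy).2.1
    have hmem : p.support.succOf y ∈ A ++ y :: p.support.succOf y :: B := by simp
    rw [← hsupp] at hmem
    exact hH.notMem hyH hmem
  · simp only [Finset.mem_union, Finset.mem_image]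
    rintro _ ⟨y, hy, rfl⟩ b (hb | ⟨z, hz, rfl⟩)
    · obtain ⟨hyp, hyv, a, ha, hya⟩ := hN y hy
      exact hp.not_adj_succOf hH hyp hyv ha hya hb
    · obtain ⟨hyp, hyv, a, ha, hya⟩ := hN y hy
      obtain ⟨hzp, hzv, b, hb, hzb⟩ := hN z hz
      rcases eq_or_ne y z with rfl | hyz
      · exact G.irrefl
      · exact hp.not_adj_succOf_succOf hH hyp hyv hzp hzv hyz ha hya hb hzb
  · have hinj : Set.InjOn p.support.succOf N := hp.1.injOn_succOf.mono fun y hy =>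
      show y ∈ p.support ∧ y ≠ v from ⟨(hN y hy).1, (hN y hy).2.1⟩
    have hcard : (G.outerBoundary H).card - 1 ≤ N.card := Finset.pred_card_le_card_erase
    rw [Finset.card_image_of_injOn hinj]
    omega

end Walk

theorem HasCrossEdge.hamiltonianConnected [Fintype V] [DecidableEq V] [DecidableRel G.Adj]
    {s t : ℕ} (h : G.HasCrossEdge s t) (hst : s ≤ t) (hδ : s + t ≤ G.minDegree) :
    HamiltonianConnected G := by
  intro u v huv
  obtain ⟨p, hp⟩ := (h.reachable hδ u v).exists_isLongestPath
  refine ⟨p, hp.1.isHamiltonian_of_mem fun w => ?_⟩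
  by_contra hw
  obtain ⟨H, hwH, hH, hclosed⟩ := exists_linkedOutside (G := G) {x | x ∈ p.support} hw
  obtain ⟨I, hIH, hI, hcard⟩ := hp.exists_card_outerBoundary_le hH hclosed
  have hHc : 1 < Hᶜ.card := by
    have huvH : {u, v} ⊆ Hᶜ := by
      simp only [Finset.insert_subset_iff, Finset.singleton_subset_iff, Finset.mem_compl]
      exact ⟨fun hu => hH.notMem hu p.start_mem_support,
        fun hv => hH.notMem hv p.end_mem_support⟩
    have := Finset.card_le_card huvH
    rw [Finset.card_pair huv] at this
    omega
  exact (h.card_add_one_lt_card_outerBoundary hst hδ ⟨w, hwH⟩ hHc hIH hI).not_ge hcard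

end SimpleGraph

theorem stmt_2_general {V : Type*} [Fintype V] [DecidableEq V] (G : SimpleGraph V) [DecidableRel G.Adj]
    (hdeg : bipIndepNum G + 1 ≤ G.minDegree) :
    HamiltonianConnected G := by
  obtain ⟨s, t, hst, hsum, h⟩ := G.exists_hasCrossEdge_of_bipIndepNum
  exact h.hamiltonianConnected hst (hsum ▸ hdeg)

/-- Zhou–Broersma–Wang–Lu 2024: a graph on at least 3 vertices with `δ(G) ≥ α̃(G) + 1` is
hamiltonian-connected. -/
theorem stmt_2 {V : Type*} [Fintype V] [DecidableEq V] (G : SimpleGraph V) [DecidableRel G.Adj]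
    (hcard : 3 ≤ Fintype.card V) (hdeg : bipIndepNum G + 1 ≤ G.minDegree) :
    HamiltonianConnected G :=
  stmt_2_general G hdeg
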